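/- Let n ≥ 1, m ≥ 1, M > 0, and 0 < γ ≤ M. Let B_0 = c·I ∈ ℝ^{n×n} with γ ≤ c ≤ M, and for j = 1,…,m define B_j := B_{j−1} − B_{j−1}s_j s_jᵀ B_{j−1}/(s_jᵀ B_{j−1} s_j) + y_j y_jᵀ/(y_jᵀ s_j), where s_j ≠ 0, s_jᵀ y_j ≥ γ‖s_j‖² > 0, and ‖y_j‖²/(y_jᵀ s_j) ≤ M for each j. Then det(B_m) ≥ γ^{n+m}/((m+n)^m M^m), and the smallest eigenvalue of B_m is at least (n−1)! γ^{n+m}/((m+n)^{n+m−1} M^{n+m−1}). -/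

import Mathlib

/-!
Each BFGS update `B ↦ B - B s sᵀ B / (sᵀ B s) + y yᵀ / (yᵀ s)` with `sᵀ y > 0` preserves positive
definiteness, raises the trace by at most `‖y‖² / (yᵀ s) ≤ M`, and, by the matrix determinant
lemma applied to the rank-two correction, multiplies the determinant by `sᵀ y / (sᵀ B s)`. Since
`sᵀ B s ≤ tr B · ‖s‖² ≤ (m + n) M ‖s‖²` and `sᵀ y ≥ γ ‖s‖²`, each factor is at least
`γ / ((m + n) M)`, starting from `det B₀ = cⁿ ≥ γⁿ`. For an eigenvalue `λ`, the other `n - 1`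
eigenvalues are positive with sum at most `tr B ≤ (m + n) M`, so AM-GM in the form
`k! ∏ aᵢ ≤ (∑ aᵢ)ᵏ` gives `(n - 1)! det B ≤ λ (tr B)ⁿ⁻¹`.
-/

open Matrix Finset
open scoped Nat

variable {ι : Type*} [Fintype ι]

lemma Matrix.IsHermitian.vecMul_eq_mulVec {A : Matrix ι ι ℝ} (hA : A.IsHermitian) (v : ι → ℝ) :
    v ᵥ* A = A *ᵥ v := by
  rw [← mulVec_transpose, ← conjTranspose_eq_transpose_of_trivial, hA.eq]

lemma Matrix.IsHermitian.dotProduct_mulVec_comm {A : Matrix ι ι ℝ} (hA : A.IsHermitian)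
    (v w : ι → ℝ) : v ⬝ᵥ A *ᵥ w = w ⬝ᵥ A *ᵥ v := by
  rw [dotProduct_mulVec, hA.vecMul_eq_mulVec, dotProduct_comm]

lemma Matrix.PosSemidef.dotProduct_mulVec_le_trace_mul {A : Matrix ι ι ℝ} (hA : A.PosSemidef)
    (x : ι → ℝ) : x ⬝ᵥ A *ᵥ x ≤ A.trace * (x ⬝ᵥ x) := by
  obtain ⟨C, rfl⟩ : ∃ C : Matrix ι ι ℝ, A = Cᴴ * C := by
    classical
    open scoped MatrixOrder in
    exact CStarAlgebra.nonneg_iff_eq_star_mul_self.mp hA.nonneg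
  have hform : x ⬝ᵥ (Cᴴ * C) *ᵥ x = ∑ i, (C *ᵥ x) i ^ 2 := by
    rw [← mulVec_mulVec, dotProduct_mulVec, conjTranspose_eq_transpose_of_trivial,
      vecMul_transpose]
    simp [dotProduct, sq]
  have htrace : (Cᴴ * C).trace = ∑ i, ∑ j, C i j ^ 2 := by
    rw [Finset.sum_comm]
    simp [trace, mul_apply, sq]
  rw [hform, htrace, Finset.sum_mul]
  gcongr with i
  calc (C *ᵥ x) i ^ 2 = (∑ j, C i j * x j) ^ 2 := rfl
    _ ≤ (∑ j, C i j ^ 2) * ∑ j, x j ^ 2 := Finset.sum_mul_sq_le_sq_mul_sq _ _ _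
    _ = (∑ j, C i j ^ 2) * (x ⬝ᵥ x) := by simp [dotProduct, sq]

lemma succ_mul_mul_pow_le_add_pow {a b : ℝ} (ha : 0 ≤ a) (hb : 0 ≤ b) (k : ℕ) :
    (k + 1) * a * b ^ k ≤ (a + b) ^ (k + 1) := by
  rw [add_pow]
  have := Finset.single_le_sum (f := fun i => a ^ i * b ^ (k + 1 - i) * ((k + 1).choose i : ℝ))
    (fun i _ => by positivity) (show 1 ∈ range (k + 2) by simp)
  simpa [mul_comm, mul_assoc, mul_left_comm] using this

lemma Finset.factorial_card_mul_prod_le_sum_pow {κ : Type*} (s : Finset κ) {f : κ → ℝ}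
    (hf : ∀ i ∈ s, 0 ≤ f i) : (#s)! * ∏ i ∈ s, f i ≤ (∑ i ∈ s, f i) ^ #s := by
  induction s using Finset.cons_induction with
  | empty => simp
  | cons a s ha ih =>
    rw [prod_cons, sum_cons, card_cons]
    have hfa : 0 ≤ f a := hf a (mem_cons_self a s)
    have hfs : ∀ i ∈ s, 0 ≤ f i := fun i hi => hf i (mem_cons_of_mem hi)
    calc ((#s + 1)! : ℝ) * (f a * ∏ i ∈ s, f i)
        = (#s + 1 : ℝ) * f a * ((#s)! * ∏ i ∈ s, f i) := by
          rw [Nat.factorial_succ]; push_cast; ring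
      _ ≤ (#s + 1 : ℝ) * f a * (∑ i ∈ s, f i) ^ #s := by gcongr; exact ih hfs
      _ ≤ (f a + ∑ i ∈ s, f i) ^ (#s + 1) :=
          succ_mul_mul_pow_le_add_pow hfa (sum_nonneg hfs) _

lemma factorial_mul_prod_le_mul_sum_pow [DecidableEq ι] {a : ι → ℝ} (ha : ∀ i, 0 ≤ a i) (i : ι) :
    ((Fintype.card ι - 1)! : ℝ) * ∏ j, a j ≤ a i * (∑ j, a j) ^ (Fintype.card ι - 1) := by
  have hcard : #(univ.erase i) = Fintype.card ι - 1 := by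
    rw [card_erase_of_mem (mem_univ i), Finset.card_univ]
  have hrest := (univ.erase i).factorial_card_mul_prod_le_sum_pow (f := a) fun j _ => ha j
  rw [hcard] at hrest
  have hsum : ∑ j ∈ univ.erase i, a j ≤ ∑ j, a j :=
    sum_le_sum_of_subset_of_nonneg (erase_subset i univ) fun j _ _ => ha j
  rw [← mul_prod_erase univ a (mem_univ i), mul_left_comm]
  exact mul_le_mul_of_nonneg_left
    (hrest.trans (pow_le_pow_left₀ (sum_nonneg fun j _ => ha j) hsum _)) (ha i)

lemma Matrix.PosSemidef.factorial_mul_det_div_pow_le [DecidableEq ι] {A : Matrix ι ι ℝ}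
    (hA : A.PosSemidef) {T : ℝ} (hT : A.trace ≤ T) {t : ℝ} (ht : t ∈ spectrum ℝ A) :
    (Fintype.card ι - 1)! * A.det / T ^ (Fintype.card ι - 1) ≤ t := by
  obtain ⟨i, rfl⟩ : t ∈ Set.range hA.1.eigenvalues := hA.1.spectrum_real_eq_range_eigenvalues ▸ ht
  have hT0 : 0 ≤ T := hA.trace_nonneg.trans hT
  rcases (pow_nonneg hT0 (Fintype.card ι - 1)).eq_or_lt with hzero | hpos
  · rw [← hzero, div_zero]
    exact hA.eigenvalues_nonneg i
  rw [div_le_iff₀ hpos]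
  calc _ ≤ hA.1.eigenvalues i * A.trace ^ (Fintype.card ι - 1) := by
        rw [hA.1.det_eq_prod_eigenvalues, hA.1.trace_eq_sum_eigenvalues]
        simpa using factorial_mul_prod_le_mul_sum_pow hA.eigenvalues_nonneg i
    _ ≤ _ := by
        gcongr
        exacts [hA.eigenvalues_nonneg i, hA.trace_nonneg]

noncomputable def bfgsUpdate (B : Matrix ι ι ℝ) (s y : ι → ℝ) : Matrix ι ι ℝ :=
  B - (1 / (s ⬝ᵥ B *ᵥ s)) • vecMulVec (B *ᵥ s) (s ᵥ* B) + (1 / (y ⬝ᵥ s)) • vecMulVec y y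

lemma bfgsUpdate_eq {B : Matrix ι ι ℝ} (hB : B.IsHermitian) (s y : ι → ℝ) :
    bfgsUpdate B s y = B - (1 / (s ⬝ᵥ B *ᵥ s)) • vecMulVec (B *ᵥ s) (B *ᵥ s)
      + (1 / (y ⬝ᵥ s)) • vecMulVec y y := by
  rw [bfgsUpdate, hB.vecMul_eq_mulVec]

lemma Matrix.IsHermitian.bfgsUpdate {B : Matrix ι ι ℝ} (hB : B.IsHermitian) (s y : ι → ℝ) :
    (bfgsUpdate B s y).IsHermitian := by
  have hvv (v : ι → ℝ) : (vecMulVec v v).IsHermitian := by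
    simpa using (posSemidef_vecMulVec_self_star v).isHermitian
  rw [bfgsUpdate_eq hB]
  exact (hB.sub ((hvv _).smul (.all _))).add ((hvv _).smul (.all _))

lemma dotProduct_bfgsUpdate_mulVec {B : Matrix ι ι ℝ} (hB : B.IsHermitian) (s y x : ι → ℝ) :
    x ⬝ᵥ bfgsUpdate B s y *ᵥ x
      = x ⬝ᵥ B *ᵥ x - (x ⬝ᵥ B *ᵥ s) ^ 2 / (s ⬝ᵥ B *ᵥ s) + (y ⬝ᵥ x) ^ 2 / (y ⬝ᵥ s) := by
  simp only [bfgsUpdate_eq hB, add_mulVec, sub_mulVec, smul_mulVec, vecMulVec_mulVec,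
    op_smul_eq_smul, dotProduct_add, dotProduct_sub, dotProduct_smul, smul_eq_mul]
  rw [dotProduct_comm (B *ᵥ s) x, dotProduct_comm x y]
  ring

lemma trace_bfgsUpdate_le {B : Matrix ι ι ℝ} (hB : B.PosSemidef) (s y : ι → ℝ) :
    (bfgsUpdate B s y).trace ≤ B.trace + (y ⬝ᵥ y) / (y ⬝ᵥ s) := by
  have hq : 0 ≤ s ⬝ᵥ B *ᵥ s := by simpa using hB.dotProduct_mulVec_nonneg s
  rw [bfgsUpdate_eq hB.1, trace_add, trace_sub, trace_smul, trace_smul, trace_vecMulVec,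
    trace_vecMulVec, smul_eq_mul, smul_eq_mul, one_div_mul_eq_div, one_div_mul_eq_div]
  have : 0 ≤ (B *ᵥ s) ⬝ᵥ (B *ᵥ s) / (s ⬝ᵥ B *ᵥ s) :=
    div_nonneg (by simpa using dotProduct_star_self_nonneg (B *ᵥ s)) hq
  linarith

lemma Matrix.PosDef.bfgsUpdate {B : Matrix ι ι ℝ} (hB : B.PosDef) {s y : ι → ℝ} (hs : s ≠ 0)
    (hsy : 0 < s ⬝ᵥ y) : (bfgsUpdate B s y).PosDef := by
  have hys : 0 < y ⬝ᵥ s := dotProduct_comm s y ▸ hsy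
  have hq : 0 < s ⬝ᵥ B *ᵥ s := by simpa using hB.dotProduct_mulVec_pos hs
  refine posDef_iff_dotProduct_mulVec.2 ⟨hB.1.bfgsUpdate s y, fun x hx => ?_⟩
  rw [star_trivial, dotProduct_bfgsUpdate_mulVec hB.1]
  set a := (x ⬝ᵥ B *ᵥ s) / (s ⬝ᵥ B *ᵥ s)
  -- `x - a • s` is the component of `x` that is `B`-orthogonal to `s`
  have hschur : x ⬝ᵥ B *ᵥ x - (x ⬝ᵥ B *ᵥ s) ^ 2 / (s ⬝ᵥ B *ᵥ s)
      = (x - a • s) ⬝ᵥ B *ᵥ (x - a • s) := by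
    simp only [a, mulVec_sub, mulVec_smul, sub_dotProduct, dotProduct_sub, smul_dotProduct,
      dotProduct_smul, smul_eq_mul, hB.1.dotProduct_mulVec_comm s x]
    field_simp
    ring
  rw [hschur]
  rcases eq_or_ne (x - a • s) 0 with hpar | hperp
  · have hx' : x = a • s := sub_eq_zero.1 hpar
    have ha : a ≠ 0 := by
      rintro h
      exact hx (by simpa [h] using hx')
    rw [hpar, zero_dotProduct, zero_add, hx', dotProduct_smul, smul_eq_mul]
    positivity
  · have hpos := hB.dotProduct_mulVec_pos hperp
    rw [star_trivial] at hpos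
    positivity

lemma det_bfgsUpdate [DecidableEq ι] {B : Matrix ι ι ℝ} (hB : B.IsHermitian)
    (hdet : IsUnit B.det) {s y : ι → ℝ} (hq : s ⬝ᵥ B *ᵥ s ≠ 0) (hys : y ⬝ᵥ s ≠ 0) :
    (bfgsUpdate B s y).det = B.det * ((s ⬝ᵥ y) / (s ⬝ᵥ B *ᵥ s)) := by
  let U : Matrix ι (Fin 2) ℝ := (of ![B *ᵥ s, y])ᵀ
  let V : Matrix (Fin 2) ι ℝ := ![(-1 / (s ⬝ᵥ B *ᵥ s)) • (B *ᵥ s), (1 / (y ⬝ᵥ s)) • y]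
  have hUV : bfgsUpdate B s y = B + U * V := by
    ext i j
    rw [Matrix.add_apply, Matrix.mul_apply, Fin.sum_univ_two]
    simp [bfgsUpdate_eq hB, U, V, vecMulVec_apply]
    ring
  have hBinv : B⁻¹ *ᵥ (B *ᵥ s) = s := by rw [mulVec_mulVec, nonsing_inv_mul _ hdet, one_mulVec]
  have hBinv_dot : (B⁻¹ *ᵥ y) ⬝ᵥ (B *ᵥ s) = y ⬝ᵥ s := by
    rw [dotProduct_comm, hB.inv.dotProduct_mulVec_comm, hBinv]
  have hW : 1 + V * B⁻¹ * U
      = !![0, -(s ⬝ᵥ y) / (s ⬝ᵥ B *ᵥ s); 1, 1 + y ⬝ᵥ B⁻¹ *ᵥ y / (y ⬝ᵥ s)] := by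
    ext k l
    rw [Matrix.add_apply, mul_apply', mul_apply_eq_vecMul, hB.inv.vecMul_eq_mulVec,
      show (fun j => U j l) = ![B *ᵥ s, y] l from rfl]
    fin_cases k <;> fin_cases l <;>
      simp [V, mulVec_smul, hBinv, hBinv_dot, dotProduct_comm (B⁻¹ *ᵥ y) y, hq, hys] <;> ring
  rw [hUV, det_add_mul U V hdet, hW, det_fin_two_of]
  ring

lemma div_mul_det_le_det_bfgsUpdate [DecidableEq ι] {B : Matrix ι ι ℝ} (hB : B.PosDef)
    {s y : ι → ℝ} (hs : s ≠ 0) {γ T : ℝ} (hγ : 0 < γ) (hsy : γ * (s ⬝ᵥ s) ≤ s ⬝ᵥ y)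
    (hT : B.trace ≤ T) : γ / T * B.det ≤ (bfgsUpdate B s y).det := by
  have hss : 0 < s ⬝ᵥ s := by simpa using dotProduct_star_self_pos_iff.2 hs
  have hq : 0 < s ⬝ᵥ B *ᵥ s := by simpa using hB.dotProduct_mulVec_pos hs
  have hsy_pos : 0 < s ⬝ᵥ y := (mul_pos hγ hss).trans_le hsy
  have hqT : s ⬝ᵥ B *ᵥ s ≤ T * (s ⬝ᵥ s) :=
    (hB.posSemidef.dotProduct_mulVec_le_trace_mul s).trans (by gcongr)
  have hT0 : 0 < T := pos_of_mul_pos_left (hq.trans_le hqT) hss.le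
  have hratio : γ / T ≤ (s ⬝ᵥ y) / (s ⬝ᵥ B *ᵥ s) := calc
    γ / T = γ * (s ⬝ᵥ s) / (T * (s ⬝ᵥ s)) := by field_simp
    _ ≤ (s ⬝ᵥ y) / (s ⬝ᵥ B *ᵥ s) := div_le_div₀ hsy_pos.le hsy hq hqT
  rw [det_bfgsUpdate hB.1 hB.det_pos.ne'.isUnit hq.ne' (dotProduct_comm s y ▸ hsy_pos).ne',
    mul_comm B.det]
  exact mul_le_mul_of_nonneg_right hratio hB.det_pos.le

theorem bfgs_posDef_trace_le_det_ge [DecidableEq ι] {m : ℕ} {M γ c : ℝ} (hγ : 0 < γ)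
    (hγc : γ ≤ c) (hcM : c ≤ M) {B : ℕ → Matrix ι ι ℝ} {s y : ℕ → ι → ℝ}
    (hB0 : B 0 = c • (1 : Matrix ι ι ℝ))
    (hs : ∀ j, 1 ≤ j → j ≤ m → s j ≠ 0)
    (hsy : ∀ j, 1 ≤ j → j ≤ m → γ * (s j ⬝ᵥ s j) ≤ s j ⬝ᵥ y j)
    (hyM : ∀ j, 1 ≤ j → j ≤ m → (y j ⬝ᵥ y j) / (y j ⬝ᵥ s j) ≤ M)
    (hrec : ∀ j, 1 ≤ j → j ≤ m → B j = bfgsUpdate (B (j - 1)) (s j) (y j)) (j : ℕ)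
    (hj : j ≤ m) :
    (B j).PosDef ∧ (B j).trace ≤ (Fintype.card ι + j) * M ∧
      γ ^ (Fintype.card ι + j) / ((m + Fintype.card ι) * M) ^ j ≤ (B j).det := by
  have hc : 0 < c := hγ.trans_le hγc
  have hM : 0 < M := hc.trans_le hcM
  induction j with
  | zero =>
    rw [hB0]
    refine ⟨PosDef.one.smul hc, ?_, ?_⟩
    · rw [trace_smul, trace_one, smul_eq_mul, Nat.cast_zero, add_zero, mul_comm]
      gcongr
    · rw [det_smul, det_one, mul_one, pow_zero, div_one, add_zero]
      gcongr
  | succ k ih =>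
    obtain ⟨hPD, htr, hdet⟩ := ih (by omega)
    have hk : 1 ≤ k + 1 := by omega
    rw [hrec (k + 1) hk hj, Nat.add_sub_cancel]
    refine ⟨hPD.bfgsUpdate (hs _ hk hj) ?_, ?_, ?_⟩
    · exact (mul_pos hγ (by simpa using dotProduct_star_self_pos_iff.2 (hs _ hk hj))).trans_le
        (hsy _ hk hj)
    · have := (trace_bfgsUpdate_le hPD.posSemidef (s (k + 1)) (y (k + 1))).trans
        (add_le_add htr (hyM _ hk hj))
      push_cast
      linarith
    · have hkm : (k : ℝ) ≤ m := by exact_mod_cast (by omega : k ≤ m)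
      calc γ ^ (Fintype.card ι + (k + 1)) / ((m + Fintype.card ι) * M) ^ (k + 1)
          = γ / ((m + Fintype.card ι) * M) *
              (γ ^ (Fintype.card ι + k) / ((m + Fintype.card ι) * M) ^ k) := by
            rw [← add_assoc, pow_succ, pow_succ]
            field_simp
        _ ≤ γ / ((m + Fintype.card ι) * M) * (B k).det := by gcongr
        _ ≤ (bfgsUpdate (B k) (s (k + 1)) (y (k + 1))).det :=
            div_mul_det_le_det_bfgsUpdate hPD (hs _ hk hj) hγ (hsy _ hk hj)
              (htr.trans (mul_le_mul_of_nonneg_right (by linarith) hM.le))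

theorem stmt18_general (n m : ℕ) (hn : 1 ≤ n) (M γ c : ℝ)
    (hγ : 0 < γ) (hγc : γ ≤ c) (hcM : c ≤ M)
    (B : ℕ → Matrix (Fin n) (Fin n) ℝ) (s y : ℕ → Fin n → ℝ)
    (hB0 : B 0 = c • (1 : Matrix (Fin n) (Fin n) ℝ))
    (hs : ∀ j, 1 ≤ j → j ≤ m → s j ≠ 0)
    (hsy : ∀ j, 1 ≤ j → j ≤ m → γ * (s j ⬝ᵥ s j) ≤ s j ⬝ᵥ y j ∧ 0 < γ * (s j ⬝ᵥ s j))
    (hyM : ∀ j, 1 ≤ j → j ≤ m → (y j ⬝ᵥ y j) / (y j ⬝ᵥ s j) ≤ M)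
    (hrec : ∀ j, 1 ≤ j → j ≤ m →
      B j = B (j - 1)
        - (1 / (s j ⬝ᵥ (B (j - 1)).mulVec (s j))) •
            Matrix.vecMulVec ((B (j - 1)).mulVec (s j)) (Matrix.vecMul (s j) (B (j - 1)))
        + (1 / (y j ⬝ᵥ s j)) • Matrix.vecMulVec (y j) (y j)) :
    γ ^ (n + m) / (((m : ℝ) + n) ^ m * M ^ m) ≤ (B m).det ∧
      ∀ t ∈ spectrum ℝ (B m),
        (Nat.factorial (n - 1) : ℝ) * γ ^ (n + m) /
          (((m : ℝ) + n) ^ (n + m - 1) * M ^ (n + m - 1)) ≤ t := by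
  obtain ⟨hPD, htr, hdet⟩ := bfgs_posDef_trace_le_det_ge hγ hγc hcM hB0 hs
    (fun j h1 h2 => (hsy j h1 h2).1) hyM hrec m le_rfl
  simp only [Fintype.card_fin] at htr hdet
  refine ⟨by rwa [mul_pow] at hdet, fun t ht => ?_⟩
  have heig := hPD.posSemidef.factorial_mul_det_div_pow_le
    (T := ((m : ℝ) + n) * M) (htr.trans_eq (by ring)) ht
  rw [Fintype.card_fin] at heig
  have hK : 0 ≤ ((m : ℝ) + n) * M := by
    have := hγ.trans_le (hγc.trans hcM)
    positivity
  calc ((n - 1)! : ℝ) * γ ^ (n + m) / ((m + n) ^ (n + m - 1) * M ^ (n + m - 1))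
      = (n - 1)! * (γ ^ (n + m) / ((m + n) * M) ^ m) / ((m + n) * M) ^ (n - 1) := by
        rw [show n + m - 1 = m + (n - 1) by omega, ← mul_pow]
        ring
    _ ≤ (n - 1)! * (B m).det / ((m + n) * M) ^ (n - 1) := by gcongr
    _ ≤ t := heig

/-- BFGS (direct Hessian-approximation) updates starting from `B 0 = c • I`
with `γ ≤ c ≤ M`, using pairs `(s j, y j)` with `s j ≠ 0`, `s jᵀ y j ≥ γ‖s j‖² > 0` and
`‖y j‖²/(y jᵀ s j) ≤ M`, satisfy `det (B m) ≥ γ^(n+m)/((m+n)^m M^m)` and every (real)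
eigenvalue of `B m` is at least `(n−1)! γ^(n+m)/((m+n)^(n+m−1) M^(n+m−1))`. -/
theorem stmt18 (n m : ℕ) (hn : 1 ≤ n) (hm : 1 ≤ m) (M γ c : ℝ)
    (hM : 0 < M) (hγ : 0 < γ) (hγM : γ ≤ M) (hγc : γ ≤ c) (hcM : c ≤ M)
    (B : ℕ → Matrix (Fin n) (Fin n) ℝ) (s y : ℕ → Fin n → ℝ)
    (hB0 : B 0 = c • (1 : Matrix (Fin n) (Fin n) ℝ))
    (hs : ∀ j, 1 ≤ j → j ≤ m → s j ≠ 0)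
    (hsy : ∀ j, 1 ≤ j → j ≤ m → γ * (s j ⬝ᵥ s j) ≤ s j ⬝ᵥ y j ∧ 0 < γ * (s j ⬝ᵥ s j))
    (hyM : ∀ j, 1 ≤ j → j ≤ m → (y j ⬝ᵥ y j) / (y j ⬝ᵥ s j) ≤ M)
    (hrec : ∀ j, 1 ≤ j → j ≤ m →
      B j = B (j - 1)
        - (1 / (s j ⬝ᵥ (B (j - 1)).mulVec (s j))) •
            Matrix.vecMulVec ((B (j - 1)).mulVec (s j)) (Matrix.vecMul (s j) (B (j - 1)))
        + (1 / (y j ⬝ᵥ s j)) • Matrix.vecMulVec (y j) (y j)) :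
    γ ^ (n + m) / (((m : ℝ) + n) ^ m * M ^ m) ≤ (B m).det ∧
      ∀ t ∈ spectrum ℝ (B m),
        (Nat.factorial (n - 1) : ℝ) * γ ^ (n + m) /
          (((m : ℝ) + n) ^ (n + m - 1) * M ^ (n + m - 1)) ≤ t :=
  stmt18_general n m hn M γ c hγ hγc hcM B s y hB0 hs hsy hyM hrec
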